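/- arXiv:1806.06243 — 3 statements merged into one kernel-verified Lean document; each statement's English description precedes it below -/
import Mathlib

section
/- Let ι be a nonempty index set and A, B : ι → ℝ. Assume there exist constants m, M with 0 < m ≤ B i ≤ M for all i, and that the set {A i / B i : i ∈ ι} is bounded below. Define p_opt = ⨅_{i} A i / B i and, for c ∈ ℝ, h(c) = ⨅_{i} (A i − c · B i). Then: (i) p_opt ≥ c if and only if h(c) ≥ 0; (ii) p_opt ≤ c if and only if h(c) ≤ 0; and consequently (iii) p_opt = c if and only if h(c) = 0, and p_opt > c if and only if h(c) > 0, and p_opt < c if and only if h(c) < 0. -/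
/-! Since `A i - c * B i = B i * (A i / B i - c)` with `B i > 0`, the two families have the same
sign pointwise, which gives the non-strict inequalities at once. The strict ones need
quantitative margins: `m * (p_opt - c)` bounds every `A i - c * B i` from below, and
`h(c) / M` bounds every `A i / B i - c` from below. -/

open Set

lemma sub_mul_le_sub_mul_of_le_div {a b c q m : ℝ} (hm : 0 < m) (hmb : m ≤ b) (hcq : c ≤ q)
    (hq : q ≤ a / b) : (q - c) * m ≤ a - c * b := by
  have hb : 0 < b := hm.trans_le hmb
  have hab : q * b ≤ a := (le_div_iff₀ hb).mp hq
  nlinarith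

lemma add_div_le_div_of_le_sub_mul {a b c d M : ℝ} (hb : 0 < b) (hbM : b ≤ M) (hd : 0 ≤ d)
    (hda : d ≤ a - c * b) : c + d / M ≤ a / b := by
  rw [le_div_iff₀ hb, add_mul]
  have : d / M * b ≤ d := by
    rw [div_mul_eq_mul_div, div_le_iff₀ (hb.trans_le hbM)]
    exact mul_le_mul_of_nonneg_left hbM hd
  linarith

section Dinkelbach

variable {ι : Type*} {A B : ι → ℝ}

lemma bddBelow_range_sub_mul {M : ℝ} (hpos : ∀ i, 0 < B i) (hBM : ∀ i, B i ≤ M)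
    (hbdd : BddBelow (range fun i => A i / B i)) (c : ℝ) :
    BddBelow (range fun i => A i - c * B i) := by
  obtain ⟨L, hL⟩ := hbdd
  refine ⟨-(M * |L - c|), forall_mem_range.mpr fun i => ?_⟩
  have hLi : L * B i ≤ A i := (le_div_iff₀ (hpos i)).mp (hL (mem_range_self i))
  have : -(B i * |L - c|) ≤ (L - c) * B i := by
    rw [mul_comm (L - c)]
    exact neg_le_of_abs_le (by rw [abs_mul, abs_of_pos (hpos i)])
  have : B i * |L - c| ≤ M * |L - c| := mul_le_mul_of_nonneg_right (hBM i) (abs_nonneg _)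
  linarith

variable [Nonempty ι]

lemma le_ciInf_div_iff_ciInf_sub_mul_nonneg (hpos : ∀ i, 0 < B i)
    (hbdd : BddBelow (range fun i => A i / B i)) {c : ℝ}
    (hbdd' : BddBelow (range fun i => A i - c * B i)) :
    c ≤ ⨅ i, A i / B i ↔ 0 ≤ ⨅ i, (A i - c * B i) := by
  simp only [le_ciInf_iff hbdd, le_ciInf_iff hbdd', le_div_iff₀ (hpos _), sub_nonneg]

lemma lt_ciInf_div_iff_ciInf_sub_mul_pos {m M : ℝ} (hm : 0 < m) (hB : ∀ i, m ≤ B i ∧ B i ≤ M)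
    (hbdd : BddBelow (range fun i => A i / B i)) {c : ℝ}
    (hbdd' : BddBelow (range fun i => A i - c * B i)) :
    c < ⨅ i, A i / B i ↔ 0 < ⨅ i, (A i - c * B i) := by
  constructor
  · intro hc
    have hmargin : ((⨅ i, A i / B i) - c) * m ≤ ⨅ i, (A i - c * B i) :=
      le_ciInf fun i => sub_mul_le_sub_mul_of_le_div hm (hB i).1 hc.le (ciInf_le hbdd i)
    exact (mul_pos (sub_pos.mpr hc) hm).trans_le hmargin
  · intro hh
    have hM : 0 < M := hm.trans_le ((hB (Classical.arbitrary ι)).1.trans (hB _).2)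
    have hmargin : c + (⨅ i, (A i - c * B i)) / M ≤ ⨅ i, A i / B i :=
      le_ciInf fun i => add_div_le_div_of_le_sub_mul (hm.trans_le (hB i).1) (hB i).2 hh.le
        (ciInf_le hbdd' i)
    exact (lt_add_of_pos_right c (div_pos hh hM)).trans_le hmargin

end Dinkelbach

theorem dinkelbach_sign_equivalences
    {ι : Type*} [Nonempty ι] (A B : ι → ℝ) (m M : ℝ)
    (hm : 0 < m) (hB : ∀ i, m ≤ B i ∧ B i ≤ M)
    (hbdd : BddBelow (Set.range fun i => A i / B i)) (c : ℝ) :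
    ((⨅ i, A i / B i) ≥ c ↔ (⨅ i, (A i - c * B i)) ≥ 0) ∧
    ((⨅ i, A i / B i) ≤ c ↔ (⨅ i, (A i - c * B i)) ≤ 0) ∧
    ((⨅ i, A i / B i) = c ↔ (⨅ i, (A i - c * B i)) = 0) ∧
    ((⨅ i, A i / B i) > c ↔ (⨅ i, (A i - c * B i)) > 0) ∧
    ((⨅ i, A i / B i) < c ↔ (⨅ i, (A i - c * B i)) < 0) := by
  have hpos : ∀ i, 0 < B i := fun i => hm.trans_le (hB i).1
  have hbdd' := bddBelow_range_sub_mul hpos (fun i => (hB i).2) hbdd c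
  have hge := le_ciInf_div_iff_ciInf_sub_mul_nonneg hpos hbdd hbdd'
  have hgt := lt_ciInf_div_iff_ciInf_sub_mul_pos hm hB hbdd hbdd'
  have hle : (⨅ i, A i / B i) ≤ c ↔ (⨅ i, (A i - c * B i)) ≤ 0 := by
    simpa only [not_lt] using hgt.not
  refine ⟨hge, hle, ?_, hgt, by simpa only [not_le] using hge.not⟩
  rw [le_antisymm_iff, le_antisymm_iff, hle, ← ge_iff_le, hge]
end

section
/- Let ι be a nonempty index set and A, B : ι → ℝ with 0 < m ≤ B i ≤ M for all i (for some constants m, M) and with {A i / B i : i ∈ ι} bounded below. Define p_opt = ⨅_{i} A i / B i and h(c) = ⨅_{i} (A i − c · B i) for c ∈ ℝ. If h(c) = 0, then c = p_opt, and for every i ∈ ι one has A i / B i = p_opt if and only if A i − c · B i = 0; in other words, the minimizers of the ratio problem inf_i A i / B i coincide with the minimizers of the parametrized problem inf_i (A i − c·B i). -/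
/-!
Writing `A i - c * B i = (A i / B i - c) * B i` with `B i > 0`, the sign of `A i - c * B i` is
the sign of `A i / B i - c`. Hence `h(c) = 0` forces `c ≤ A i / B i` for all `i`, i.e. `c ≤ p_opt`;
conversely, if `c < p_opt` then every `A i - c * B i` is at least `(p_opt - c) * m > 0`, so
`h(c) > 0`. Thus `c = p_opt`, and `A i / B i = c ↔ A i = c * B i` gives the coincidence of
minimizers.
-/

open Set

namespace Dinkelbach

variable {ι : Type*} {A B : ι → ℝ}

lemma sub_mul_eq_div_sub_mul {a b : ℝ} (c : ℝ) (hb : b ≠ 0) : a - c * b = (a / b - c) * b := by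
  rw [sub_mul, div_mul_cancel₀ _ hb]

/-- Without this, `⨅ i, (A i - c * B i)` could be the junk value `0` of an unbounded infimum. -/
lemma bddBelow_range_sub_mul {M : ℝ} (hB : ∀ i, 0 < B i ∧ B i ≤ M)
    (hbdd : BddBelow (range fun i => A i / B i)) (c : ℝ) :
    BddBelow (range fun i => A i - c * B i) := by
  obtain ⟨b, hb⟩ := hbdd
  refine ⟨min (b - c) 0 * M, ?_⟩
  rintro _ ⟨i, rfl⟩
  have hratio : min (b - c) 0 ≤ A i / B i - c := by
    have : b ≤ A i / B i := hb (mem_range_self i)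
    exact (min_le_left _ _).trans (by linarith)
  calc min (b - c) 0 * M ≤ min (b - c) 0 * B i :=
        mul_le_mul_of_nonpos_left (hB i).2 (min_le_right _ _)
    _ ≤ (A i / B i - c) * B i := mul_le_mul_of_nonneg_right hratio (hB i).1.le
    _ = A i - c * B i := (sub_mul_eq_div_sub_mul c (hB i).1.ne').symm

lemma le_div_of_ciInf_sub_mul_eq_zero {c : ℝ} (hBpos : ∀ i, 0 < B i)
    (hbdd : BddBelow (range fun i => A i - c * B i)) (hc : ⨅ i, (A i - c * B i) = 0) (i : ι) :
    c ≤ A i / B i := by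
  have hnonneg : 0 ≤ A i - c * B i := hc ▸ ciInf_le hbdd i
  rw [le_div_iff₀ (hBpos i)]
  linarith

lemma ciInf_div_le_of_ciInf_sub_mul_nonpos [Nonempty ι] {m c : ℝ} (hm : 0 < m)
    (hB : ∀ i, m ≤ B i) (hbdd : BddBelow (range fun i => A i / B i))
    (hc : ⨅ i, (A i - c * B i) ≤ 0) :
    ⨅ i, A i / B i ≤ c := by
  set p := ⨅ i, A i / B i
  by_contra! hcp
  have hlower : ∀ i, (p - c) * m ≤ A i - c * B i := fun i => by
    have hBpos : 0 < B i := hm.trans_le (hB i)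
    calc (p - c) * m ≤ (p - c) * B i := mul_le_mul_of_nonneg_left (hB i) (by linarith)
      _ ≤ (A i / B i - c) * B i :=
          mul_le_mul_of_nonneg_right (by linarith [ciInf_le hbdd i]) hBpos.le
      _ = A i - c * B i := (sub_mul_eq_div_sub_mul c hBpos.ne').symm
  have := (le_ciInf hlower).trans hc
  exact (mul_pos (sub_pos.2 hcp) hm).not_ge this

end Dinkelbach

open Dinkelbach in
theorem dinkelbach_solution_sets_coincide
    {ι : Type*} [Nonempty ι] (A B : ι → ℝ) (m M : ℝ)
    (hm : 0 < m) (hB : ∀ i, m ≤ B i ∧ B i ≤ M)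
    (hbdd : BddBelow (Set.range fun i => A i / B i))
    (c : ℝ) (hc : (⨅ i, (A i - c * B i)) = 0) :
    c = (⨅ i, A i / B i) ∧
      ∀ i, A i / B i = (⨅ j, A j / B j) ↔ A i - c * B i = 0 := by
  have hBpos : ∀ i, 0 < B i := fun i => hm.trans_le (hB i).1
  have hbdd' := bddBelow_range_sub_mul (fun i => ⟨hBpos i, (hB i).2⟩) hbdd c
  have hcp : c = ⨅ i, A i / B i :=
    le_antisymm (le_ciInf (le_div_of_ciInf_sub_mul_eq_zero hBpos hbdd' hc))
      (ciInf_div_le_of_ciInf_sub_mul_nonpos hm (fun i => (hB i).1) hbdd hc.le)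
  refine ⟨hcp, fun i => ?_⟩
  rw [← hcp, sub_eq_zero, div_eq_iff (hBpos i).ne']
end

section
/- Let p : ℕ → ℝ be non-decreasing, let β ∈ ℝ and y ∈ ℕ, and let ν be a finitely supported probability mass function on ℕ (the distribution of the next service time Y'). For z ∈ ℕ define G(z) = Σ_{k ∈ supp ν} ν(k) · ( Σ_{n=0}^{z+k−1} (p(n+y) − β) ), and define g(n) = Σ_{k ∈ supp ν} ν(k) · p(y + n + k) − β (the conditional expectation E[p(y + n + Y')] − β). Suppose there exists n ∈ ℕ with g(n) ≥ 0, and let z* = min{ n ∈ ℕ : g(n) ≥ 0 }. Then G(z*) ≤ G(z) for every z ∈ ℕ. -/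
/-!
The expected penalty grows by exactly `g z` when the waiting time goes from `z` to `z + 1`:
every realisation `k` of the next service time adds the single term `p (z + k + y) - β`, and
averaging these over `ν` gives `g z`. Since `p` is non-decreasing, so is `g`; hence `G` decreases
while `g < 0` and increases once `g ≥ 0`, and its minimum sits at the first `z` with `g z ≥ 0`.
-/

open Finset Set

theorem Nat.isMinOn_univ_of_succ_le_of_le_succ {α : Type*} [Preorder α] {f : ℕ → α} {m : ℕ}
    (hdown : ∀ n < m, f (n + 1) ≤ f n) (hup : ∀ n ≥ m, f n ≤ f (n + 1)) :
    IsMinOn f univ m := by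
  refine isMinOn_univ_iff.2 fun z => ?_
  rcases le_total m z with hmz | hzm
  · exact Nat.rel_of_forall_rel_succ_of_le_of_le (· ≤ ·) hup le_rfl hmz
  · exact Nat.decreasingInduction (motive := fun k _ => f m ≤ f k)
      (fun k hk ih => ih.trans (hdown k hk)) le_rfl hzm

theorem Nat.isMinOn_univ_of_increment_monotone {α : Type*} [AddCommMonoid α] [LinearOrder α]
    [IsOrderedAddMonoid α] {G g : ℕ → α} {m : ℕ} (hG : ∀ z, G (z + 1) = G z + g z)
    (hg : Monotone g) (hm : IsLeast {n | 0 ≤ g n} m) : IsMinOn G univ m := by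
  refine Nat.isMinOn_univ_of_succ_le_of_le_succ (fun n hn => ?_) (fun n hn => ?_) <;> rw [hG]
  · exact add_le_of_nonpos_right (le_of_not_ge fun h => (hm.2 h).not_gt hn)
  · exact le_add_of_nonneg_right (hm.1.trans (hg hn))

namespace PMF

variable {α : Type*} (ν : PMF α)

theorem tsum_toReal : ∑' a, (ν a).toReal = 1 := by
  rw [← ENNReal.tsum_toReal_eq ν.apply_ne_top, ν.tsum_coe, ENNReal.toReal_one]

theorem summable_toReal_mul (hfin : ν.support.Finite) (c : α → ℝ) :
    Summable fun a => (ν a).toReal * c a :=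
  summable_of_hasFiniteSupport <| hfin.subset fun a ha =>
    (ν.mem_support_iff a).2 fun h => ha (by simp [h])

theorem tsum_toReal_mul_sub_const (hfin : ν.support.Finite) (c : α → ℝ) (b : ℝ) :
    ∑' a, (ν a).toReal * (c a - b) = ∑' a, (ν a).toReal * c a - b := by
  simp_rw [mul_sub]
  rw [(ν.summable_toReal_mul hfin c).tsum_sub (ν.summable_toReal_mul hfin fun _ => b),
    tsum_mul_right, ν.tsum_toReal, one_mul]

end PMF

section AgePenalty

variable (p : ℕ → ℝ) (β : ℝ) (y : ℕ) (ν : PMF ℕ)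

theorem expected_penalty_succ (hfin : ν.support.Finite) (z : ℕ) :
    ∑' k, (ν k).toReal * ∑ n ∈ range (z + 1 + k), (p (n + y) - β) =
      ∑' k, (ν k).toReal * ∑ n ∈ range (z + k), (p (n + y) - β) +
        ((∑' k, (ν k).toReal * p (y + z + k)) - β) := by
  have hstep : ∀ k, (ν k).toReal * ∑ n ∈ range (z + 1 + k), (p (n + y) - β) =
      (ν k).toReal * ∑ n ∈ range (z + k), (p (n + y) - β) +
        (ν k).toReal * (p (y + z + k) - β) := fun k => by
    rw [add_right_comm, sum_range_succ, mul_add, show z + k + y = y + z + k by omega]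
  simp_rw [hstep]
  rw [(ν.summable_toReal_mul hfin _).tsum_add (ν.summable_toReal_mul hfin _),
    ν.tsum_toReal_mul_sub_const hfin]

theorem monotone_expectation_shift (hfin : ν.support.Finite) (hp : Monotone p) :
    Monotone fun n => ∑' k, (ν k).toReal * p (y + n + k) := fun _ _ hab =>
  Summable.tsum_le_tsum
    (fun _ => mul_le_mul_of_nonneg_left (hp (by omega)) ENNReal.toReal_nonneg)
    (ν.summable_toReal_mul hfin _) (ν.summable_toReal_mul hfin _)

end AgePenalty

theorem optimal_waiting_time_threshold
    (p : ℕ → ℝ) (hp : Monotone p) (β : ℝ) (y : ℕ)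
    (ν : PMF ℕ) (hfin : ν.support.Finite)
    (G g : ℕ → ℝ)
    (hG : ∀ z : ℕ,
      G z = ∑' k : ℕ, (ν k).toReal * (∑ n ∈ Finset.range (z + k), (p (n + y) - β)))
    (hg : ∀ n : ℕ, g n = (∑' k : ℕ, (ν k).toReal * p (y + n + k)) - β)
    (zstar : ℕ) (hzstar : IsLeast {n : ℕ | 0 ≤ g n} zstar) :
    ∀ z : ℕ, G zstar ≤ G z := by
  have hstep : ∀ z, G (z + 1) = G z + g z := fun z => by
    rw [hG, hG, hg, expected_penalty_succ p β y ν hfin]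
  have hmono : Monotone g := fun a b hab => by
    rw [hg, hg]
    exact sub_le_sub_right (monotone_expectation_shift p y ν hfin hp hab) β
  exact isMinOn_univ_iff.1 (Nat.isMinOn_univ_of_increment_monotone hstep hmono hzstar)
end
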